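/- arXiv:1212.5614 — 2 statements merged into one kernel-verified Lean document; each statement's English description precedes it below -/
import Mathlib

section
/- Let B be chosen uniformly from B_π. For any coordinate i and any interval (a,b) ⊆ [0,1], P[B[i] ∈ (a, (a+b)/2)] ≥ P[B[i] ∈ ((a+b)/2, b)]. That is, the marginal distribution of each coordinate assigns at least as much mass to the lower half of any interval as to the upper half. -/
open MeasureTheory

/-- Coordinate `i ∈ {1,…,n-1}` of a super-diagonal vector `X ∈ ℝ^{n-1}`, with the
conventions `X[0] = X[n] = 0`. -/
def extCoord (m : ℕ) (X : Fin m → ℝ) (i : ℕ) : ℝ :=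
  if h : 1 ≤ i ∧ i ≤ m then X ⟨i - 1, by omega⟩ else 0

/-- The super-diagonal parameterization `B_π ⊆ ℝ^{n-1}` of birth and death kernels
with stationary distribution `π`. -/
def BDSet (n : ℕ) (π : ℕ → ℝ) : Set (Fin (n-1) → ℝ) :=
  {X | ∀ i : ℕ, 1 ≤ i → i ≤ n - 1 →
    0 ≤ extCoord (n-1) X i ∧
    extCoord (n-1) X i ≤ min (1 - π (i-1) / π i * extCoord (n-1) X (i-1))
                            (π (i+1) / π i * (1 - extCoord (n-1) X (i+1)))}

/-- The uniform (normalized Lebesgue) probability measure on `B_π`. -/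
noncomputable def unifBD (n : ℕ) (π : ℕ → ℝ) : Measure (Fin (n-1) → ℝ) :=
  (volume (BDSet n π))⁻¹ • volume.restrict (BDSet n π)

lemma measurable_extCoord (m k : ℕ) : Measurable (fun X : Fin m → ℝ => extCoord m X k) := by
  unfold extCoord
  split
  · exact measurable_pi_apply _
  · exact measurable_const

lemma measurableSet_BDSet (n : ℕ) (π : ℕ → ℝ) : MeasurableSet (BDSet n π) := by
  have : BDSet n π = ⋂ j : ℕ, {X : Fin (n-1) → ℝ | 1 ≤ j → j ≤ n - 1 →
      0 ≤ extCoord (n-1) X j ∧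
      extCoord (n-1) X j ≤ min (1 - π (j-1) / π j * extCoord (n-1) X (j-1))
                              (π (j+1) / π j * (1 - extCoord (n-1) X (j+1)))} := by
    ext X; simp [BDSet, Set.mem_iInter]
  rw [this]
  refine MeasurableSet.iInter fun j => ?_
  by_cases hj : 1 ≤ j ∧ j ≤ n - 1
  · simp only [hj.1, hj.2, forall_true_left]
    exact MeasurableSet.inter
      (measurableSet_le measurable_const (measurable_extCoord _ _))
      (measurableSet_le (measurable_extCoord _ _)
        ((measurable_const.sub ((measurable_extCoord _ _).const_mul _)).min
          (((measurable_const.sub (measurable_extCoord _ _))).const_mul _)))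
  · have : {X : Fin (n-1) → ℝ | 1 ≤ j → j ≤ n - 1 → 0 ≤ extCoord (n-1) X j ∧
      extCoord (n-1) X j ≤ min (1 - π (j-1) / π j * extCoord (n-1) X (j-1))
                              (π (j+1) / π j * (1 - extCoord (n-1) X (j+1)))} = Set.univ := by
      ext X; simp only [Set.mem_setOf_eq, Set.mem_univ, iff_true]
      intro h1 h2; exact absurd ⟨h1, h2⟩ hj
    rw [this]; exact MeasurableSet.univ


/-- Largeness: for `B` uniform on `B_π` and any interval `(a,b) ⊆ [0,1]`, the coordinate
`B[i]` puts at least as much mass on the lower half `(a,(a+b)/2)` as on the upper half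
`((a+b)/2, b)`. -/
theorem stmt_3 (n : ℕ) (hn : 2 ≤ n) (π : ℕ → ℝ) (hπ : ∀ j, 1 ≤ j → j ≤ n → 0 < π j)
    (i : ℕ) (hi1 : 1 ≤ i) (hi2 : i ≤ n - 1)
    (a b : ℝ) (ha : 0 ≤ a) (hb : b ≤ 1) (hab : a ≤ b) :
    unifBD n π {X | extCoord (n-1) X i ∈ Set.Ioo ((a+b)/2) b}
      ≤ unifBD n π {X | extCoord (n-1) X i ∈ Set.Ioo a ((a+b)/2)} := by
  set c : ℝ := (b - a) / 2 with hc_def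
  have hc : 0 ≤ c := by rw [hc_def]; linarith
  have hidx : i - 1 < n - 1 := by omega
  set idx : Fin (n-1) := ⟨i - 1, hidx⟩ with hidx_def
  set w : Fin (n-1) → ℝ := fun j => if j = idx then -c else 0 with hw_def
  -- extCoord of w
  have hwE : ∀ k : ℕ, extCoord (n-1) w k = if k = i then -c else 0 := by
    intro k
    by_cases hk : 1 ≤ k ∧ k ≤ n - 1
    · rw [extCoord, dif_pos hk]
      have : (⟨k - 1, by omega⟩ : Fin (n-1)) = idx ↔ k = i := by
        simp only [hidx_def, Fin.mk.injEq]
        omega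
      simp only [hw_def]
      rw [if_congr this rfl rfl]
    · rw [extCoord, dif_neg hk]
      have : k ≠ i := by omega
      rw [if_neg this]
  have haddE : ∀ (X : Fin (n-1) → ℝ) (k : ℕ),
      extCoord (n-1) (w + X) k = extCoord (n-1) w k + extCoord (n-1) X k := by
    intro X k
    by_cases hk : 1 ≤ k ∧ k ≤ n - 1
    · simp only [extCoord, dif_pos hk]; rfl
    · simp only [extCoord, dif_neg hk]; ring
  -- key subset
  have hsub : {X | extCoord (n-1) X i ∈ Set.Ioo ((a+b)/2) b} ∩ BDSet n π ⊆
      (fun X => w + X) ⁻¹' ({X | extCoord (n-1) X i ∈ Set.Ioo a ((a+b)/2)} ∩ BDSet n π) := by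
    rintro X ⟨hX1, hX2⟩
    obtain ⟨hXlo, hXhi⟩ := hX1
    constructor
    · -- coordinate in lower half
      rw [Set.mem_setOf_eq, haddE, hwE, if_pos rfl]
      exact ⟨by linarith [hc_def], by linarith [hc_def]⟩
    · -- membership in BDSet
      intro j hj1 hj2
      obtain ⟨h0, hm⟩ := hX2 j hj1 hj2
      have hmin1 := le_trans hm (min_le_left _ _)
      have hmin2 := le_trans hm (min_le_right _ _)
      rw [haddE, hwE, haddE, hwE, haddE, hwE]
      constructor
      · by_cases hji : j = i
        · subst hji
          rw [if_pos rfl]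
          linarith [hc_def]
        · rw [if_neg hji]; linarith
      · refine le_min ?_ ?_
        · -- 1 - π(j-1)/π j * (d + X(j-1))
          by_cases hj1i : j - 1 = i
          · have hji : j = i + 1 := by omega
            rw [if_pos hj1i, if_neg (by omega : j ≠ i)]
            have hp1 : 0 < π i := hπ i hi1 (by omega)
            have hp2 : 0 < π (i+1) := hπ (i+1) (by omega) (by omega)
            have hcoef : 0 ≤ π (j-1) / π j := by
              rw [hj1i, hji]; positivity
            nlinarith [mul_nonneg hcoef hc]
          · rw [if_neg hj1i]
            by_cases hji : j = i
            · rw [if_pos hji]; linarith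
            · rw [if_neg hji]; linarith
        · by_cases hj1i : j + 1 = i
          · have hji : j = i - 1 := by omega
            have hi2' : 2 ≤ i := by omega
            rw [if_pos hj1i, if_neg (by omega : j ≠ i)]
            have hp1 : 0 < π i := hπ i hi1 (by omega)
            have hp2 : 0 < π (i-1) := hπ (i-1) (by omega) (by omega)
            have hcoef : 0 ≤ π (j+1) / π j := by
              rw [hj1i, hji]; positivity
            nlinarith [mul_nonneg hcoef hc]
          · rw [if_neg hj1i]
            by_cases hji : j = i
            · rw [if_pos hji]; linarith
            · rw [if_neg hji]; linarith
  -- measurability of the slabs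
  have hS : ∀ s : Set ℝ, MeasurableSet s → MeasurableSet {X : Fin (n-1) → ℝ | extCoord (n-1) X i ∈ s} :=
    fun s hs => (measurable_extCoord _ _) hs
  have hSlo := hS _ (measurableSet_Ioo (a := a) (b := (a+b)/2))
  have hShi := hS _ (measurableSet_Ioo (a := (a+b)/2) (b := b))
  -- conclude
  simp only [unifBD, Measure.smul_apply, smul_eq_mul]
  rw [Measure.restrict_apply hShi, Measure.restrict_apply hSlo]
  refine mul_le_mul_right ?_ _
  calc volume ({X | extCoord (n-1) X i ∈ Set.Ioo ((a+b)/2) b} ∩ BDSet n π)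
      ≤ volume ((fun X => w + X) ⁻¹' ({X | extCoord (n-1) X i ∈ Set.Ioo a ((a+b)/2)} ∩ BDSet n π)) :=
        measure_mono hsub
    _ = volume ({X | extCoord (n-1) X i ∈ Set.Ioo a ((a+b)/2)} ∩ BDSet n π) :=
        measure_preimage_add _ _ _
end

section
/- Let X be chosen uniformly from B_π. Then for all x ∈ [0,1] and each coordinate i, P[X[i] ≥ x·min(1, π(i+1)/π(i))] ≤ 1 - x. -/
open MeasureTheory

/-! `B_π` lies in the slab `0 ≤ X[i] ≤ c := min(1, π(i+1)/π(i))`, and lowering a coordinate of a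
point of `B_π` keeps it in `B_π`, since each constraint is antitone in the neighbouring
coordinates. Hence the affine map replacing `Y[i]` by `(1-x) Y[i] + x c` sends `B_π` onto a set
containing `{X ∈ B_π | x c ≤ X[i]}`, and it scales volume by `1 - x`. -/

open ProbabilityTheory

theorem volume_image_update_mul_add {ι : Type*} [Fintype ι] [DecidableEq ι] (k : ι) (a b : ℝ)
    (s : Set (ι → ℝ)) :
    volume ((fun Y : ι → ℝ => Function.update Y k (a * Y k + b)) '' s)
      = ENNReal.ofReal |a| * volume s := by
  set L := Matrix.toLin' (Matrix.diagonal (Function.update (1 : ι → ℝ) k a))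
  have hL : (fun Y : ι → ℝ => Function.update Y k (a * Y k + b)) = (· + Pi.single k b) ∘ L := by
    funext Y j
    rcases eq_or_ne j k with rfl | hj
    · simp [L, Matrix.mulVec_diagonal]
    · simp [L, Matrix.mulVec_diagonal, hj]
  rw [hL, Set.image_comp, Set.image_add_right, measure_preimage_add_right,
    Measure.addHaar_image_linearMap, LinearMap.det_toLin', Matrix.det_diagonal,
    Finset.prod_update_of_mem (Finset.mem_univ k)]
  simp

theorem subset_image_update_of_update_mem {ι : Type*} [DecidableEq ι] {S : Set (ι → ℝ)} {k : ι}
    {c x : ℝ} (hx0 : 0 ≤ x) (hx1 : x ≤ 1) (hS : ∀ X ∈ S, X k ∈ Set.Icc 0 c)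
    (hlower : ∀ X ∈ S, ∀ t, 0 ≤ t → t ≤ X k → Function.update X k t ∈ S) :
    {X | x * c ≤ X k} ∩ S ⊆ (fun Y => Function.update Y k ((1 - x) * Y k + x * c)) '' S := by
  rintro X ⟨hxX : x * c ≤ X k, hX⟩
  obtain ⟨hX0, hXc⟩ := hS X hX
  -- at `x = 1` the division by zero gives `t = 0`, and then `X k = c`
  set t := (X k - x * c) / (1 - x)
  have ht : 0 ≤ t ∧ t ≤ X k ∧ (1 - x) * t + x * c = X k := by
    rcases hx1.lt_or_eq with hx | rfl
    · have h1x : 0 < 1 - x := sub_pos.2 hx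
      refine ⟨div_nonneg (by linarith) h1x.le, (div_le_iff₀ h1x).2 (by nlinarith), ?_⟩
      rw [mul_div_cancel₀ _ h1x.ne']
      ring
    · simp only [t, sub_self, div_zero]
      exact ⟨le_rfl, hX0, by linarith⟩
  obtain ⟨ht0, htX, hupd⟩ := ht
  exact ⟨Function.update X k t, hlower X hX t ht0 htX, by simp [hupd]⟩

theorem volume_inter_le_of_update_mem {ι : Type*} [Fintype ι] [DecidableEq ι] {S : Set (ι → ℝ)}
    {k : ι} {c x : ℝ} (hx0 : 0 ≤ x) (hx1 : x ≤ 1) (hS : ∀ X ∈ S, X k ∈ Set.Icc 0 c)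
    (hlower : ∀ X ∈ S, ∀ t, 0 ≤ t → t ≤ X k → Function.update X k t ∈ S) :
    volume ({X | x * c ≤ X k} ∩ S) ≤ ENNReal.ofReal (1 - x) * volume S :=
  calc volume ({X | x * c ≤ X k} ∩ S)
      ≤ volume ((fun Y => Function.update Y k ((1 - x) * Y k + x * c)) '' S) :=
        measure_mono (subset_image_update_of_update_mem hx0 hx1 hS hlower)
    _ = ENNReal.ofReal (1 - x) * volume S := by
        rw [volume_image_update_mul_add, abs_of_nonneg (sub_nonneg.2 hx1)]

theorem ProbabilityTheory.cond_apply_le_of_measure_inter_le {Ω : Type*} [MeasurableSpace Ω]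
    {μ : Measure Ω} {s t : Set Ω} (ht : MeasurableSet t) {r : ENNReal}
    (h : μ (s ∩ t) ≤ r * μ s) : μ[t | s] ≤ r :=
  calc μ[t | s] = (μ s)⁻¹ * μ (s ∩ t) := cond_apply' ht μ
    _ ≤ (μ s)⁻¹ * (r * μ s) := by gcongr
    _ = r * ((μ s)⁻¹ * μ s) := by ring
    _ ≤ r := mul_le_of_le_one_right' (ENNReal.inv_mul_le_one _)

section extCoord

variable {m : ℕ} {X Y : Fin m → ℝ}

@[simp]
theorem extCoord_zero (X : Fin m → ℝ) : extCoord m X 0 = 0 := by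
  simp [extCoord]

theorem extCoord_succ (X : Fin m → ℝ) (k : Fin m) : extCoord m X (k + 1) = X k := by
  simp [extCoord, k.isLt]

theorem extCoord_nonneg (hX : 0 ≤ X) (j : ℕ) : 0 ≤ extCoord m X j := by
  unfold extCoord
  split_ifs
  exacts [hX _, le_rfl]

theorem extCoord_mono (h : Y ≤ X) (j : ℕ) : extCoord m Y j ≤ extCoord m X j := by
  unfold extCoord
  split_ifs
  exacts [h _, le_rfl]

end extCoord

section BDSet

variable {n : ℕ} {π : ℕ → ℝ} {X Y : Fin (n - 1) → ℝ}

theorem nonneg_of_mem_BDSet (hX : X ∈ BDSet n π) : 0 ≤ X := fun k => by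
  simpa [extCoord_succ] using (hX (k + 1) (by omega) (by omega)).1

theorem div_mul_extCoord_pred_le (hπ : ∀ j, 1 ≤ j → j ≤ n → 0 < π j) {j : ℕ} (hj1 : 1 ≤ j)
    (hj2 : j ≤ n - 1) (hYX : Y ≤ X) :
    π (j - 1) / π j * extCoord (n - 1) Y (j - 1)
      ≤ π (j - 1) / π j * extCoord (n - 1) X (j - 1) := by
  rcases hj1.eq_or_lt with rfl | hj1
  · simp
  · have := hπ (j - 1) (by omega) (by omega)
    have := hπ j (by omega) (by omega)
    gcongr
    exact extCoord_mono hYX _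

theorem mem_BDSet_of_le (hπ : ∀ j, 1 ≤ j → j ≤ n → 0 < π j) (hX : X ∈ BDSet n π) (hY : 0 ≤ Y)
    (hYX : Y ≤ X) : Y ∈ BDSet n π := by
  intro j hj1 hj2
  refine ⟨extCoord_nonneg hY j, (extCoord_mono hYX j).trans ((hX j hj1 hj2).2.trans ?_)⟩
  have := hπ (j + 1) (by omega) (by omega)
  have := hπ j (by omega) (by omega)
  gcongr min (1 - ?_) (_ * (1 - ?_))
  · exact div_mul_extCoord_pred_le hπ hj1 hj2 hYX
  · exact extCoord_mono hYX _

theorem extCoord_le_min_of_mem_BDSet (hπ : ∀ j, 1 ≤ j → j ≤ n → 0 < π j) (hX : X ∈ BDSet n π)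
    {i : ℕ} (hi1 : 1 ≤ i) (hi2 : i ≤ n - 1) :
    extCoord (n - 1) X i ≤ min 1 (π (i + 1) / π i) := by
  have hX0 := nonneg_of_mem_BDSet hX
  have hpred : 0 ≤ π (i - 1) / π i * extCoord (n - 1) X (i - 1) := by
    simpa [extCoord] using div_mul_extCoord_pred_le hπ hi1 hi2 hX0
  have := hπ (i + 1) (by omega) (by omega)
  have := hπ i (by omega) (by omega)
  have hsucc : π (i + 1) / π i * (1 - extCoord (n - 1) X (i + 1)) ≤ π (i + 1) / π i := by
    have := extCoord_nonneg hX0 (i + 1)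
    exact mul_le_of_le_one_right (by positivity) (by linarith)
  refine (hX i hi1 hi2).2.trans (min_le_min ?_ hsucc)
  linarith

theorem unifBD_eq_cond : unifBD n π = volume[|BDSet n π] := rfl

end BDSet

theorem stmt_5_general (n : ℕ) (π : ℕ → ℝ) (hπ : ∀ j, 1 ≤ j → j ≤ n → 0 < π j)
    (i : ℕ) (hi1 : 1 ≤ i) (hi2 : i ≤ n - 1) :
    ∀ x : ℝ, 0 ≤ x → x ≤ 1 →
      unifBD n π {X | x * min 1 (π (i+1) / π i) ≤ extCoord (n-1) X i}
        ≤ ENNReal.ofReal (1 - x) := by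
  intro x hx0 hx1
  set k : Fin (n - 1) := ⟨i - 1, by omega⟩
  have hcoord (X : Fin (n - 1) → ℝ) : extCoord (n - 1) X i = X k := by
    simpa [k, Nat.sub_add_cancel hi1] using extCoord_succ X k
  simp only [hcoord, unifBD_eq_cond]
  refine cond_apply_le_of_measure_inter_le (measurableSet_le measurable_const
    (measurable_pi_apply k)) ?_
  rw [Set.inter_comm]
  refine volume_inter_le_of_update_mem hx0 hx1 (fun X hX => ⟨nonneg_of_mem_BDSet hX k, ?_⟩)
    (fun X hX t ht0 htX => mem_BDSet_of_le hπ hX ?_ ?_)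
  · exact hcoord X ▸ extCoord_le_min_of_mem_BDSet hπ hX hi1 hi2
  · exact le_update_iff.2 ⟨ht0, fun j _ => nonneg_of_mem_BDSet hX j⟩
  · exact update_le_iff.2 ⟨htX, fun j _ => le_rfl⟩

/-- For `X` uniform on `B_π`: `P[X[i] ≥ x·min(1, π(i+1)/π(i))] ≤ 1 - x` for `x ∈ [0,1]`. -/
theorem stmt_5 (n : ℕ) (hn : 2 ≤ n) (π : ℕ → ℝ) (hπ : ∀ j, 1 ≤ j → j ≤ n → 0 < π j)
    (i : ℕ) (hi1 : 1 ≤ i) (hi2 : i ≤ n - 1) :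
    ∀ x : ℝ, 0 ≤ x → x ≤ 1 →
      unifBD n π {X | x * min 1 (π (i+1) / π i) ≤ extCoord (n-1) X i}
        ≤ ENNReal.ofReal (1 - x) :=
  stmt_5_general n π hπ i hi1 hi2
end
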